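/- arXiv:gr-qc/9403029 — 5 statements merged into one kernel-verified Lean document; each statement's English description precedes it below -/
import Mathlib

section
/- If \(\omega_0 : \mathbb{R} \times (0,\infty) \to \mathbb{R}\) satisfies \(\omega_0(x,\rho) = \beta/\sqrt{x^2+\rho^2} + O(1/(x^2+\rho^2))\) as \(x^2+\rho^2 \to \infty\), then for any \(L > 0\) the series \(\omega(x,\rho) = \omega_0(x,\rho) + \sum_{n\neq 0}\left(\omega_0(x+nL,\rho) - \frac{\beta}{L|n|}\right)\) converges absolutely at every point \((x,\rho)\) where all translates \(\omega_0(x+nL,\rho)\) are defined, and the resulting function satisfies \(\omega(x+L,\rho)=\omega(x,\rho)\). -/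
/-!
With `m = L|n|` and `s = √((x + nL)² + ρ²)` one has `|s - m| ≤ |x| + ρ`, so both
`|ω₀ - β/s| ≤ C/s²` and `|β/s - β/m|` are `O(1/m²)`: the terms of the series are `O(1/n²)`.
Including the term `n = 0`, the series becomes a sum over all of `ℤ`, and translating `x` by `L`
only shifts the summation index, up to the correction constants: the difference of the
two sums is the telescoping series `∑ (c n - c (n + 1))` with `c n = β/(L|n|) → 0`, which vanishes.
-/

open Filter Topology SummationFilter

-- At `n = 0` the correction `β / (L * 0)` is zero, so this term is just `ω₀ x ρ`.
noncomputable def periodizedTerm (ω₀ : ℝ → ℝ → ℝ) (β L x ρ : ℝ) (n : ℤ) : ℝ :=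
  ω₀ (x + n * L) ρ - β / (L * |n|)

theorem abs_sqrt_sq_add_sq_sub_abs_le (u v ρ : ℝ) :
    |√(u ^ 2 + ρ ^ 2) - (|v|)| ≤ |u - v| + |ρ| := by
  have hlow : |u| ≤ √(u ^ 2 + ρ ^ 2) := Real.abs_le_sqrt (by nlinarith)
  have hup : √(u ^ 2 + ρ ^ 2) ≤ |u| + |ρ| :=
    (Real.sqrt_le_left (by positivity)).mpr
      (by nlinarith [sq_abs u, sq_abs ρ, abs_nonneg u, abs_nonneg ρ])
  have huv := abs_sub_abs_le_abs_sub u v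
  have hvu := abs_sub_abs_le_abs_sub v u
  rw [abs_sub_comm v u] at hvu
  rw [abs_sub_le_iff]
  constructor <;> linarith [abs_nonneg ρ]

theorem abs_div_sub_div_le {β s m D : ℝ} (hm : 0 < m) (hs : m / 2 ≤ s) (hD : |s - m| ≤ D) :
    |β / s - β / m| ≤ 2 * |β| * D / m ^ 2 := by
  have hs0 : 0 < s := by linarith
  have hD0 : 0 ≤ D := (abs_nonneg _).trans hD
  have hdiff : β / s - β / m = β * (m - s) / (s * m) := by field_simp
  calc |β / s - β / m| = |β| * |s - m| / (s * m) := by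
        rw [hdiff, abs_div, abs_mul, abs_of_pos (mul_pos hs0 hm), abs_sub_comm]
    _ ≤ |β| * D / (m / 2 * m) := by gcongr
    _ = 2 * |β| * D / m ^ 2 := by field_simp

theorem abs_periodizedTerm_le {ω₀ : ℝ → ℝ → ℝ} {β L C R x ρ : ℝ}
    (hasym : ∀ x ρ : ℝ, 0 < ρ → R ^ 2 ≤ x ^ 2 + ρ ^ 2 →
      |ω₀ x ρ - β / Real.sqrt (x ^ 2 + ρ ^ 2)| ≤ C / (x ^ 2 + ρ ^ 2))
    (hρ : 0 < ρ) {n : ℤ} (hn : 2 * (|x| + ρ + |R|) ≤ L * |(n : ℝ)|) :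
    |periodizedTerm ω₀ β L x ρ n| ≤
      (4 * |C| + 2 * |β| * (|x| + ρ)) / L ^ 2 * (1 / (n : ℝ) ^ 2) := by
  set u := x + n * L
  set m := L * |(n : ℝ)|
  set s := √(u ^ 2 + ρ ^ 2)
  have hm : 0 < m := by linarith [abs_nonneg x, abs_nonneg R]
  have hL : 0 < L := pos_of_mul_pos_left hm (abs_nonneg _)
  have hsm : |s - m| ≤ |x| + ρ := by
    have h := abs_sqrt_sq_add_sq_sub_abs_le u (n * L) ρ
    rwa [show u - n * L = x by ring, abs_of_pos hρ, abs_mul, abs_of_pos hL, mul_comm] at h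
  have hs : m / 2 ≤ s := by linarith [(abs_sub_le_iff.mp hsm).2, abs_nonneg R]
  have hs2 : s ^ 2 = u ^ 2 + ρ ^ 2 := Real.sq_sqrt (by positivity)
  have hR : R ^ 2 ≤ u ^ 2 + ρ ^ 2 := by
    rw [← hs2, ← sq_abs R]
    exact pow_le_pow_left₀ (abs_nonneg R) (by linarith [abs_nonneg x]) 2
  have hE : |ω₀ u ρ - β / s| ≤ 4 * |C| / m ^ 2 :=
    calc |ω₀ u ρ - β / s| ≤ C / s ^ 2 := hs2 ▸ hasym u ρ hρ hR
      _ ≤ |C| / (m / 2) ^ 2 := by gcongr; exact le_abs_self C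
      _ = 4 * |C| / m ^ 2 := by ring
  have hm2 : m ^ 2 = L ^ 2 * (n : ℝ) ^ 2 := by rw [mul_pow, sq_abs]
  calc |periodizedTerm ω₀ β L x ρ n| ≤ |ω₀ u ρ - β / s| + |β / s - β / m| := by
        rw [periodizedTerm, Int.cast_abs]; exact abs_sub_le _ _ _
    _ ≤ 4 * |C| / m ^ 2 + 2 * |β| * (|x| + ρ) / m ^ 2 :=
        add_le_add hE (abs_div_sub_div_le hm hs hsm)
    _ = (4 * |C| + 2 * |β| * (|x| + ρ)) / L ^ 2 * (1 / (n : ℝ) ^ 2) := by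
        rw [hm2]; field_simp

theorem tendsto_abs_intCast_cofinite_atTop :
    Tendsto (fun n : ℤ => |(n : ℝ)|) cofinite atTop :=
  tendsto_norm_cocompact_atTop.comp Int.tendsto_coe_cofinite

theorem hasSum_sub_add_one_of_tendsto_cofinite {G : Type*} [AddCommGroup G] [TopologicalSpace G]
    [IsTopologicalAddGroup G] [T2Space G] {c : ℤ → G} (hc : Tendsto c cofinite (𝓝 0))
    (hs : Summable fun n => c n - c (n + 1)) : HasSum (fun n => c n - c (n + 1)) 0 := by
  obtain ⟨a, ha⟩ := hs
  have hIco := hasSum_symmetricIco_int_iff.mp (ha.mono_left (symmetricIco ℤ).le_atTop)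
  simp only [Finset.sum_Ico_int_sub] at hIco
  have hpos : Tendsto (fun N : ℕ => c N) atTop (𝓝 0) := by
    rw [← Nat.cofinite_eq_atTop]; exact hc.comp Nat.cast_injective.tendsto_cofinite
  have hneg : Tendsto (fun N : ℕ => c (-N)) atTop (𝓝 0) := by
    rw [← Nat.cofinite_eq_atTop]
    exact hc.comp (neg_injective.comp Nat.cast_injective).tendsto_cofinite
  convert ha
  simpa using tendsto_nhds_unique (hneg.sub hpos) hIco

theorem summable_periodizedTerm {ω₀ : ℝ → ℝ → ℝ} {β L C R ρ : ℝ}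
    (hasym : ∀ x ρ : ℝ, 0 < ρ → R ^ 2 ≤ x ^ 2 + ρ ^ 2 →
      |ω₀ x ρ - β / Real.sqrt (x ^ 2 + ρ ^ 2)| ≤ C / (x ^ 2 + ρ ^ 2))
    (hL : 0 < L) (hρ : 0 < ρ) (x : ℝ) : Summable (periodizedTerm ω₀ β L x ρ) := by
  refine .of_norm_bounded_eventually ((Real.summable_one_div_int_pow.mpr one_lt_two).mul_left
    ((4 * |C| + 2 * |β| * (|x| + ρ)) / L ^ 2)) ?_
  filter_upwards [(tendsto_abs_intCast_cofinite_atTop.const_mul_atTop hL).eventually_ge_atTop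
    (2 * (|x| + ρ + |R|))] with n hn
  exact abs_periodizedTerm_le hasym hρ hn

theorem tsum_periodizedTerm_add_period {ω₀ : ℝ → ℝ → ℝ} {β L x ρ : ℝ} (hL : 0 < L)
    (hx : Summable (periodizedTerm ω₀ β L x ρ))
    (hxL : Summable (periodizedTerm ω₀ β L (x + L) ρ)) :
    ∑' n, periodizedTerm ω₀ β L (x + L) ρ n = ∑' n, periodizedTerm ω₀ β L x ρ n := by
  set c : ℤ → ℝ := fun n => β / (L * |n|)
  have hshift : ∀ n, periodizedTerm ω₀ β L (x + L) ρ n =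
      periodizedTerm ω₀ β L x ρ (n + 1) - (c n - c (n + 1)) := by
    intro n; simp only [periodizedTerm, c]; push_cast; ring_nf
  have hx' : Summable fun n => periodizedTerm ω₀ β L x ρ (n + 1) :=
    (Equiv.addRight (1 : ℤ)).summable_iff.mpr hx
  have hc : Tendsto c cofinite (𝓝 0) := by
    simpa only [c, Int.cast_abs] using
      tendsto_const_nhds.div_atTop (tendsto_abs_intCast_cofinite_atTop.const_mul_atTop hL)
  have hcs : Summable fun n => c n - c (n + 1) :=
    (hx'.sub hxL).congr fun n => by rw [hshift]; ring
  rw [tsum_congr hshift, hx'.tsum_sub hcs,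
    (hasSum_sub_add_one_of_tendsto_cofinite hc hcs).tsum_eq, sub_zero]
  exact (Equiv.addRight (1 : ℤ)).tsum_eq (periodizedTerm ω₀ β L x ρ)

theorem tsum_periodizedTerm_eq_add_tsum_ne_zero {ω₀ : ℝ → ℝ → ℝ} {β L x ρ : ℝ}
    (h : Summable (periodizedTerm ω₀ β L x ρ)) :
    ∑' n, periodizedTerm ω₀ β L x ρ n =
      ω₀ x ρ + ∑' n : {n : ℤ // n ≠ 0}, periodizedTerm ω₀ β L x ρ n := by
  rw [← h.tsum_subtype_add_tsum_subtype_compl {0}, tsum_singleton]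
  have h0 : periodizedTerm ω₀ β L x ρ 0 = ω₀ x ρ := by simp [periodizedTerm]
  rw [h0]
  rfl

theorem periodic_series_converges_and_periodic_general
    (ω₀ : ℝ → ℝ → ℝ) (β L C R : ℝ) (hL : 0 < L)
    (hasym : ∀ x ρ : ℝ, 0 < ρ → R ^ 2 ≤ x ^ 2 + ρ ^ 2 →
      |ω₀ x ρ - β / Real.sqrt (x ^ 2 + ρ ^ 2)| ≤ C / (x ^ 2 + ρ ^ 2)) :
    ∀ x ρ : ℝ, 0 < ρ →
      Summable (fun n : {n : ℤ // n ≠ 0} =>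
        |ω₀ (x + (n : ℤ) * L) ρ - β / (L * |(n : ℤ)|)|) ∧
      (fun x' => ω₀ x' ρ + ∑' n : {n : ℤ // n ≠ 0},
          (ω₀ (x' + (n : ℤ) * L) ρ - β / (L * |(n : ℤ)|))) (x + L)
        = (fun x' => ω₀ x' ρ + ∑' n : {n : ℤ // n ≠ 0},
          (ω₀ (x' + (n : ℤ) * L) ρ - β / (L * |(n : ℤ)|))) x := by
  intro x ρ hρ
  have hsum := summable_periodizedTerm hasym hL hρ
  refine ⟨((hsum x).subtype _).abs, ?_⟩
  have hper := tsum_periodizedTerm_add_period hL (hsum x) (hsum (x + L))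
  rwa [tsum_periodizedTerm_eq_add_tsum_ne_zero (hsum x),
    tsum_periodizedTerm_eq_add_tsum_ne_zero (hsum (x + L))] at hper

/-- Theorem 1 of the paper: if `ω₀(x,ρ) = β/√(x²+ρ²) + O(1/(x²+ρ²))` at infinity,
then for any period `L > 0` the series
`ω(x,ρ) = ω₀(x,ρ) + ∑_{n≠0} (ω₀(x+nL,ρ) - β/(L|n|))`
converges absolutely at every point with `ρ > 0`, and the resulting function is
periodic in `x` with period `L`. -/
theorem periodic_series_converges_and_periodic
    (ω₀ : ℝ → ℝ → ℝ) (β L C R : ℝ) (hL : 0 < L) (hC : 0 < C) (hR : 0 < R)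
    (hasym : ∀ x ρ : ℝ, 0 < ρ → R ^ 2 ≤ x ^ 2 + ρ ^ 2 →
      |ω₀ x ρ - β / Real.sqrt (x ^ 2 + ρ ^ 2)| ≤ C / (x ^ 2 + ρ ^ 2)) :
    ∀ x ρ : ℝ, 0 < ρ →
      Summable (fun n : {n : ℤ // n ≠ 0} =>
        |ω₀ (x + (n : ℤ) * L) ρ - β / (L * |(n : ℤ)|)|) ∧
      (fun x' => ω₀ x' ρ + ∑' n : {n : ℤ // n ≠ 0},
          (ω₀ (x' + (n : ℤ) * L) ρ - β / (L * |(n : ℤ)|))) (x + L)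
        = (fun x' => ω₀ x' ρ + ∑' n : {n : ℤ // n ≠ 0},
          (ω₀ (x' + (n : ℤ) * L) ρ - β / (L * |(n : ℤ)|))) x :=
  periodic_series_converges_and_periodic_general ω₀ β L C R hL hasym
end

section
/- Let \(M > 0\), \(L > 2M\), and \({\cal E}_0(x,\rho)=\frac{s_1+s_2-2M}{s_1+s_2+2M}\) with \(s_1=\sqrt{(x-M)^2+\rho^2}\), \(s_2=\sqrt{(x+M)^2+\rho^2}\). The infinite product \({\cal E}(x,\rho)={\cal E}_0(x,\rho)\prod_{n=1}^{\infty}{\cal E}_0(x+nL,\rho)\,{\cal E}_0(x-nL,\rho)\,e^{4M/(nL)}\) converges for all \((x,\rho)\) with \(\rho \ge 0\) except at the points \((\pm M + kL, 0)\), \(k\in\mathbb{Z}\), and satisfies \({\cal E}(x+L,\rho)={\cal E}(x,\rho)\). -/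
/-- The Schwarzschild Ernst potential in Weyl coordinates. -/
noncomputable def ernst0 (M x ρ : ℝ) : ℝ :=
  (Real.sqrt ((x - M) ^ 2 + ρ ^ 2) + Real.sqrt ((x + M) ^ 2 + ρ ^ 2) - 2 * M) /
  (Real.sqrt ((x - M) ^ 2 + ρ ^ 2) + Real.sqrt ((x + M) ^ 2 + ρ ^ 2) + 2 * M)

/-- The periodic Ernst potential: `ℰ = ℰ₀(x,ρ) ∏_{n≥1} ℰ₀(x+nL,ρ) ℰ₀(x-nL,ρ) e^{4M/(nL)}`. -/
noncomputable def ernstPeriodic (M L x ρ : ℝ) : ℝ :=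
  ernst0 M x ρ * ∏' n : ℕ,
    (ernst0 M (x + (n + 1) * L) ρ * ernst0 M (x - (n + 1) * L) ρ *
      Real.exp (4 * M / ((n + 1) * L)))

/-!
Since `ℰ₀ = 1 - 4M/(s₁ + s₂ + 2M)` and `s₁ + s₂ = 2|x| + O(1)`, one has
`log ℰ₀(x ± u) = -2M/u + O(1/u²)`: the constant `4M/(nL)` cancels the `1/n` part of
`log ℰ₀(x + nL) + log ℰ₀(x - nL)`, and the series of logarithms converges absolutely.
Periodicity needs no logarithms, so zeros of `ℰ₀` do no harm: shifting `x` by `L` turns the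
`N`-th partial product times `ℰ₀(x - NL)` into the unshifted one times `ℰ₀(x + (N+1)L)`, and
`ℰ₀ → 1` at infinity.
-/

open Filter Topology Finset

/-- `s₁ + s₂`: the sum of the distances from `(y, ρ)` to the rod endpoints `(±M, 0)`. -/
noncomputable def focalDistSum (M y ρ : ℝ) : ℝ :=
  Real.sqrt ((y - M) ^ 2 + ρ ^ 2) + Real.sqrt ((y + M) ^ 2 + ρ ^ 2)

lemma sqrt_sq_add_sq_le_abs_add_abs (a b : ℝ) : Real.sqrt (a ^ 2 + b ^ 2) ≤ |a| + |b| :=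
  (Real.sqrt_le_left (by positivity)).2 <| by
    nlinarith [sq_abs a, sq_abs b, mul_nonneg (abs_nonneg a) (abs_nonneg b)]

section focalDistSum

variable (M y ρ : ℝ)

lemma abs_sub_add_abs_add_le_focalDistSum : |y - M| + |y + M| ≤ focalDistSum M y ρ :=
  add_le_add (Real.abs_le_sqrt (le_add_of_nonneg_right (sq_nonneg ρ)))
    (Real.abs_le_sqrt (le_add_of_nonneg_right (sq_nonneg ρ)))

lemma two_mul_abs_le_focalDistSum : 2 * |y| ≤ focalDistSum M y ρ := by
  have h := abs_add_le (y - M) (y + M)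
  rw [show y - M + (y + M) = 2 * y by ring, abs_mul, abs_two] at h
  linarith [abs_sub_add_abs_add_le_focalDistSum M y ρ]

lemma two_mul_abs_mass_le_focalDistSum : 2 * |M| ≤ focalDistSum M y ρ := by
  have h := abs_sub (y + M) (y - M)
  rw [show y + M - (y - M) = 2 * M by ring, abs_mul, abs_two] at h
  linarith [abs_sub_add_abs_add_le_focalDistSum M y ρ]

lemma focalDistSum_le : focalDistSum M y ρ ≤ 2 * |y| + 2 * |M| + 2 * |ρ| := by
  have h₁ := sqrt_sq_add_sq_le_abs_add_abs (y - M) ρ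
  have h₂ := sqrt_sq_add_sq_le_abs_add_abs (y + M) ρ
  unfold focalDistSum
  linarith [abs_sub y M, abs_add_le y M]

end focalDistSum

lemma abs_focalDistSum_add_sub_le {M : ℝ} (hM : 0 ≤ M) (ρ : ℝ) {y u A : ℝ}
    (hyu : |(|y| - u)| ≤ A) :
    |focalDistSum M y ρ + 2 * M - 2 * u| ≤ 2 * A + 4 * M + 2 * |ρ| := by
  have hlo := two_mul_abs_le_focalDistSum M y ρ
  have hhi := focalDistSum_le M y ρ
  rw [abs_of_nonneg hM] at hhi
  obtain ⟨hA₁, hA₂⟩ := abs_le.1 hyu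
  exact abs_le.2 ⟨by linarith [abs_nonneg ρ], by linarith⟩

lemma ernst0_eq_focalDistSum (M y ρ : ℝ) :
    ernst0 M y ρ = (focalDistSum M y ρ - 2 * M) / (focalDistSum M y ρ + 2 * M) := rfl

lemma ernst0_nonneg {M : ℝ} (hM : 0 ≤ M) (y ρ : ℝ) : 0 ≤ ernst0 M y ρ := by
  have h := two_mul_abs_mass_le_focalDistSum M y ρ
  rw [abs_of_nonneg hM] at h
  rw [ernst0_eq_focalDistSum]
  exact div_nonneg (by linarith) (by linarith)

lemma ernst0_eq_one_sub {M : ℝ} (hM : 0 < M) (y ρ : ℝ) :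
    ernst0 M y ρ = 1 - 4 * M / (focalDistSum M y ρ + 2 * M) := by
  have h : 0 < focalDistSum M y ρ + 2 * M := by
    linarith [two_mul_abs_le_focalDistSum M y ρ, abs_nonneg y]
  rw [ernst0_eq_focalDistSum]
  field_simp
  ring

lemma tendsto_ernst0_cocompact {M : ℝ} (hM : 0 < M) (ρ : ℝ) :
    Tendsto (fun y => ernst0 M y ρ) (cocompact ℝ) (𝓝 1) := by
  have hden : Tendsto (fun y => focalDistSum M y ρ + 2 * M) (cocompact ℝ) atTop := by
    refine tendsto_atTop_mono (fun y => ?_) (tendsto_norm_cocompact_atTop.const_mul_atTop two_pos)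
    linarith [two_mul_abs_le_focalDistSum M y ρ, Real.norm_eq_abs y]
  have h := tendsto_const_nhds (x := (1 : ℝ)).sub
    ((tendsto_const_nhds (x := 4 * M)).div_atTop hden)
  rw [sub_zero] at h
  exact h.congr fun y => (ernst0_eq_one_sub hM y ρ).symm

lemma abs_log_one_sub_add_le {t : ℝ} (ht : t ≤ 1 / 2) :
    |Real.log (1 - t) + t| ≤ 2 * t ^ 2 := by
  have hpos : 0 < 1 - t := by linarith
  have hup := Real.log_le_sub_one_of_pos hpos
  have hlo := Real.one_sub_inv_le_log_of_pos hpos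
  have hinv : (1 - t)⁻¹ ≤ 1 + t + 2 * t ^ 2 := by
    rw [inv_le_iff_one_le_mul₀ hpos]
    nlinarith
  exact abs_le.2 ⟨by nlinarith, by nlinarith⟩

lemma abs_log_one_sub_div_add_div_le {c w u D : ℝ} (hc : 0 < c) (hw : |w - 2 * u| ≤ D)
    (hcD : 4 * c ≤ D) (hDu : 2 * D ≤ u) :
    |Real.log (1 - 4 * c / w) + 2 * c / u| ≤ (32 * c ^ 2 + 2 * c * D) / u ^ 2 := by
  obtain ⟨hw₁, -⟩ := abs_le.1 hw
  have hu : 0 < u := by linarith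
  have hwu : u ≤ w := by linarith
  have hw₀ : 0 < w := hu.trans_le hwu
  set t := 4 * c / w with ht
  have ht₀ : 0 ≤ t := by positivity
  have htu : t ≤ 4 * c / u := div_le_div_of_nonneg_left (by positivity) hu hwu
  have ht_half : 4 * c / u ≤ 1 / 2 := by rw [div_le_iff₀ hu]; linarith
  have hsq : 2 * t ^ 2 ≤ 32 * c ^ 2 / u ^ 2 := by
    calc 2 * t ^ 2 ≤ 2 * (4 * c / u) ^ 2 := by gcongr
      _ = 32 * c ^ 2 / u ^ 2 := by ring
  have hdiff : |2 * c / u - t| ≤ 2 * c * D / u ^ 2 := by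
    have heq : 2 * c / u - t = 2 * c * (w - 2 * u) / (u * w) := by
      rw [ht]; field_simp; ring
    rw [heq, abs_div, abs_mul, abs_of_nonneg (by positivity : 0 ≤ 2 * c),
      abs_of_pos (mul_pos hu hw₀), sq]
    exact div_le_div₀ (mul_nonneg (by positivity) (by linarith)) (by gcongr) (mul_pos hu hu)
      (by gcongr)
  calc |Real.log (1 - t) + 2 * c / u| = |(Real.log (1 - t) + t) + (2 * c / u - t)| := by ring_nf
    _ ≤ |Real.log (1 - t) + t| + |2 * c / u - t| := abs_add_le _ _
    _ ≤ 32 * c ^ 2 / u ^ 2 + 2 * c * D / u ^ 2 :=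
      add_le_add ((abs_log_one_sub_add_le (htu.trans ht_half)).trans hsq) hdiff
    _ = (32 * c ^ 2 + 2 * c * D) / u ^ 2 := by ring

lemma abs_log_ernst0_add_le {M : ℝ} (hM : 0 < M) (ρ : ℝ) {y u A : ℝ}
    (hyu : |(|y| - u)| ≤ A) (hu : 2 * (2 * A + 4 * M + 2 * |ρ|) ≤ u) :
    |Real.log (ernst0 M y ρ) + 2 * M / u| ≤
      (32 * M ^ 2 + 2 * M * (2 * A + 4 * M + 2 * |ρ|)) / u ^ 2 := by
  rw [ernst0_eq_one_sub hM]
  exact abs_log_one_sub_div_add_div_le hM (abs_focalDistSum_add_sub_le hM.le ρ hyu)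
    (by linarith [abs_nonneg ρ, (abs_nonneg _).trans hyu]) hu

lemma summable_div_nat_add_one_mul_sq (C L : ℝ) :
    Summable fun n : ℕ => C / (((n : ℝ) + 1) * L) ^ 2 := by
  have h := ((summable_nat_add_iff 1).2 (Real.summable_one_div_nat_pow.2 one_lt_two)).mul_left
    (C / L ^ 2)
  refine h.congr fun n => ?_
  push_cast
  rw [mul_pow, mul_one_div, div_div, mul_comm (L ^ 2)]

theorem summable_log_ernst0_add_log_ernst0_sub {M L : ℝ} (hM : 0 < M) (hL : 0 < L) (x ρ : ℝ) :
    Summable fun n : ℕ =>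
      Real.log (ernst0 M (x + (n + 1) * L) ρ) + Real.log (ernst0 M (x - (n + 1) * L) ρ)
        + 4 * M / ((n + 1) * L) := by
  set K := 32 * M ^ 2 + 2 * M * (2 * |x| + 4 * M + 2 * |ρ|)
  have hu : Tendsto (fun n : ℕ => ((n : ℝ) + 1) * L) atTop atTop :=
    (tendsto_atTop_add_const_right _ 1 tendsto_natCast_atTop_atTop).atTop_mul_const hL
  refine (summable_div_nat_add_one_mul_sq (2 * K) L).of_norm_bounded_eventually_nat ?_
  filter_upwards [hu.eventually_ge_atTop (2 * (2 * |x| + 4 * M + 2 * |ρ|))] with n hn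
  set u := ((n : ℝ) + 1) * L
  have hu₀ : 0 ≤ u := by positivity
  have h₁ := abs_log_ernst0_add_le hM ρ (y := x + u) (A := |x|) (by
    simpa [abs_of_nonneg hu₀] using abs_abs_sub_abs_le_abs_sub (x + u) u) hn
  have h₂ := abs_log_ernst0_add_le hM ρ (y := x - u) (A := |x|) (by
    simpa [abs_of_nonneg hu₀] using abs_abs_sub_abs_le_abs_sub (x - u) (-u)) hn
  calc ‖Real.log (ernst0 M (x + u) ρ) + Real.log (ernst0 M (x - u) ρ) + 4 * M / u‖
      = |(Real.log (ernst0 M (x + u) ρ) + 2 * M / u) +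
          (Real.log (ernst0 M (x - u) ρ) + 2 * M / u)| := by rw [Real.norm_eq_abs]; ring_nf
    _ ≤ K / u ^ 2 + K / u ^ 2 := (abs_add_le _ _).trans (add_le_add h₁ h₂)
    _ = 2 * K / u ^ 2 := by ring

section Periodic

variable (E : ℝ → ℝ) (c : ℕ → ℝ) (L : ℝ)

lemma mul_prod_range_mul_eq (x : ℝ) (N : ℕ) :
    E (x + L) * (∏ n ∈ range N, E (x + L + (n + 1) * L) * E (x + L - (n + 1) * L) * c n) *
        E (x - N * L) =
      E x * (∏ n ∈ range N, E (x + (n + 1) * L) * E (x - (n + 1) * L) * c n) *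
        E (x + (N + 1) * L) := by
  induction N with
  | zero => simp [mul_comm]
  | succ N ih =>
    rw [prod_range_succ, prod_range_succ]
    push_cast
    rw [show x + L - (N + 1) * L = x - N * L by ring,
      show x + L + (N + 1) * L = x + (N + 1 + 1) * L by ring]
    linear_combination (E (x + (N + 1 + 1) * L) * E (x - (N + 1) * L) * c N) * ih

variable {E L}

lemma mul_tprod_add_eq (hL : 0 < L) (hE : Tendsto E (cocompact ℝ) (𝓝 1)) {x : ℝ}
    (h₀ : Multipliable fun n : ℕ => E (x + (n + 1) * L) * E (x - (n + 1) * L) * c n)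
    (h₁ : Multipliable fun n : ℕ => E (x + L + (n + 1) * L) * E (x + L - (n + 1) * L) * c n) :
    E (x + L) * ∏' n : ℕ, E (x + L + (n + 1) * L) * E (x + L - (n + 1) * L) * c n =
      E x * ∏' n : ℕ, E (x + (n + 1) * L) * E (x - (n + 1) * L) * c n := by
  have hNL : Tendsto (fun N : ℕ => (N : ℝ) * L) atTop atTop :=
    tendsto_natCast_atTop_atTop.atTop_mul_const hL
  have hbot : Tendsto (fun N : ℕ => E (x - N * L)) atTop (𝓝 1) :=
    (hE.mono_left atBot_le_cocompact).comp <|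
      (tendsto_atBot_add_const_left _ x (tendsto_neg_atTop_atBot.comp hNL)).congr fun N => by
        simp [sub_eq_add_neg]
  have htop : Tendsto (fun N : ℕ => E (x + (N + 1) * L)) atTop (𝓝 1) :=
    (hE.mono_left atTop_le_cocompact).comp <| tendsto_atTop_add_const_left _ x <|
      (tendsto_atTop_add_const_right _ 1 tendsto_natCast_atTop_atTop).atTop_mul_const hL
  have hlhs := ((tendsto_const_nhds (x := E (x + L))).mul h₁.hasProd.tendsto_prod_nat).mul hbot
  have hrhs := ((tendsto_const_nhds (x := E x)).mul h₀.hasProd.tendsto_prod_nat).mul htop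
  rw [mul_one] at hlhs hrhs
  exact tendsto_nhds_unique (hlhs.congr (mul_prod_range_mul_eq E c L x)) hrhs

end Periodic

lemma multipliable_of_summable_of_eq_exp {ι : Type*} {f g : ι → ℝ} (hg : Summable g)
    (hfg : ∀ i, f i ≠ 0 → f i = Real.exp (g i)) : Multipliable f := by
  by_cases! h : ∃ i, f i = 0
  · exact multipliable_of_exists_eq_zero h
  · exact hg.hasSum.rexp.multipliable.congr fun i => (hfg i (h i)).symm

theorem multipliable_ernst0_mul_ernst0_mul_exp {M L : ℝ} (hM : 0 < M) (hL : 0 < L) (x ρ : ℝ) :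
    Multipliable fun n : ℕ =>
      ernst0 M (x + (n + 1) * L) ρ * ernst0 M (x - (n + 1) * L) ρ *
        Real.exp (4 * M / ((n + 1) * L)) := by
  refine multipliable_of_summable_of_eq_exp (summable_log_ernst0_add_log_ernst0_sub hM hL x ρ)
    fun n hn => ?_
  have h₁ := (ernst0_nonneg hM.le _ ρ).lt_of_ne' (left_ne_zero_of_mul (left_ne_zero_of_mul hn))
  have h₂ := (ernst0_nonneg hM.le _ ρ).lt_of_ne' (right_ne_zero_of_mul (left_ne_zero_of_mul hn))
  rw [Real.exp_add, Real.exp_add, Real.exp_log h₁, Real.exp_log h₂]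

theorem ernstPeriodic_converges_and_periodic_general
    (M L : ℝ) (hM : 0 < M) (hL : 2 * M < L) (x ρ : ℝ) :
    Summable (fun n : ℕ =>
      Real.log (ernst0 M (x + (n + 1) * L) ρ) + Real.log (ernst0 M (x - (n + 1) * L) ρ)
        + 4 * M / ((n + 1) * L)) ∧
    Multipliable (fun n : ℕ =>
      ernst0 M (x + (n + 1) * L) ρ * ernst0 M (x - (n + 1) * L) ρ *
        Real.exp (4 * M / ((n + 1) * L))) ∧
    ernstPeriodic M L (x + L) ρ = ernstPeriodic M L x ρ := by
  have hL₀ : 0 < L := by linarith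
  refine ⟨summable_log_ernst0_add_log_ernst0_sub hM hL₀ x ρ,
    multipliable_ernst0_mul_ernst0_mul_exp hM hL₀ x ρ, ?_⟩
  exact mul_tprod_add_eq _ hL₀ (tendsto_ernst0_cocompact hM ρ)
    (multipliable_ernst0_mul_ernst0_mul_exp hM hL₀ x ρ)
    (multipliable_ernst0_mul_ernst0_mul_exp hM hL₀ (x + L) ρ)

/-- Theorems 1-2 of the paper for the Schwarzschild potential: for `L > 2M` the
infinite product defining the periodic Ernst potential converges (equivalently, the
series of logarithms with the convergence-generating constants `4M/(nL)` converges)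
at every `(x,ρ)`, `ρ ≥ 0`, away from the translated horizon endpoints
`(±M + kL, 0)`, and the resulting function is `L`-periodic in `x`. -/
theorem ernstPeriodic_converges_and_periodic
    (M L : ℝ) (hM : 0 < M) (hL : 2 * M < L) (x ρ : ℝ) (hρ : 0 ≤ ρ)
    (hreg : ¬ ∃ k : ℤ, ρ = 0 ∧ (x = M + k * L ∨ x = -M + k * L)) :
    Summable (fun n : ℕ =>
      Real.log (ernst0 M (x + (n + 1) * L) ρ) + Real.log (ernst0 M (x - (n + 1) * L) ρ)
        + 4 * M / ((n + 1) * L)) ∧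
    Multipliable (fun n : ℕ =>
      ernst0 M (x + (n + 1) * L) ρ * ernst0 M (x - (n + 1) * L) ρ *
        Real.exp (4 * M / ((n + 1) * L))) ∧
    ernstPeriodic M L (x + L) ρ = ernstPeriodic M L x ρ :=
  ernstPeriodic_converges_and_periodic_general M L hM hL x ρ
end

section
/- With \(M>0\), \(L>2M\), and \({\cal E}\) the periodic Ernst potential defined by the infinite product \({\cal E}(x,\rho)={\cal E}_0(x,\rho)\prod_{n\ge1}{\cal E}_0(x+nL,\rho){\cal E}_0(x-nL,\rho)e^{4M/(nL)}\), one has \({\cal E}(x,\rho) > 0\) for all \((x,\rho)\) in the fundamental region \(\{-L/2\le x\le L/2,\ \rho\ge 0\}\) except on the horizon segment \(\{\rho=0,\ |x|\le M\}\), where \({\cal E}=0\). -/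
/-! Write `𝓔₀ = (u - 2M)/(u + 2M)`, where `u = s₁ + s₂` is the sum of the distances to the rod
ends `(±M, 0)`. Off the horizon `u > 2M`, so `𝓔₀ > 0`, and `1 + t ≤ eᵗ` gives
`𝓔₀ ≥ exp (-4M/(u - 2M))`. For the `n`-th pair of images, `|x ± nL| ≥ nL - L/2` forces
`u ≥ 2nL - L`, and together with the regularising factor `e^{4M/(nL)}` the pair is bounded
below by `exp (-C/n²)`. Since `∑ 1/n²` converges, every partial product, hence the infinite
product, is at least `exp (-C ∑ 1/n²) > 0`. -/

open Real

lemma tprod_pos_of_exp_neg_le {ι : Type*} {f g : ι → ℝ} (hg : Summable g) (hg0 : ∀ i, 0 ≤ g i)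
    (hfg : ∀ i, exp (-g i) ≤ f i) : 0 < ∏' i, f i := by
  by_cases hf : Multipliable f
  · refine (exp_pos (-∑' i, g i)).trans_le (le_hasProd_of_le_prod hf.hasProd fun s ↦ ?_)
    calc exp (-∑' i, g i) ≤ exp (-∑ i ∈ s, g i) :=
          exp_le_exp.mpr (neg_le_neg (hg.sum_le_tsum s fun i _ ↦ hg0 i))
      _ = ∏ i ∈ s, exp (-g i) := by rw [← Finset.sum_neg_distrib, exp_sum]
      _ ≤ ∏ i ∈ s, f i := Finset.prod_le_prod (fun i _ ↦ (exp_pos _).le) fun i _ ↦ hfg i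
  · -- `∏'` of a non-multipliable family is `1` by convention
    rw [tprod_eq_one_of_not_multipliable hf]
    exact one_pos

lemma exp_neg_div_le_div_add {a t : ℝ} (ht : 0 < t) (ha : 0 ≤ a) :
    exp (-(a / t)) ≤ t / (t + a) := by
  have h : (t + a) / t ≤ exp (a / t) := by
    rw [add_div, div_self ht.ne', add_comm]
    exact add_one_le_exp _
  calc exp (-(a / t)) = (exp (a / t))⁻¹ := exp_neg _
    _ ≤ ((t + a) / t)⁻¹ := inv_anti₀ (by positivity) h
    _ = t / (t + a) := inv_div _ _

noncomputable def rodDistSum (M x ρ : ℝ) : ℝ :=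
  √((x - M) ^ 2 + ρ ^ 2) + √((x + M) ^ 2 + ρ ^ 2)

lemma ernst0_eq (M x ρ : ℝ) :
    ernst0 M x ρ = (rodDistSum M x ρ - 2 * M) / (rodDistSum M x ρ + 2 * M) :=
  rfl

lemma abs_le_sqrt_sq_add_sq (a b : ℝ) : |a| ≤ √(a ^ 2 + b ^ 2) := by
  rw [← sqrt_sq_eq_abs]
  exact sqrt_le_sqrt (by nlinarith)

lemma abs_lt_sqrt_sq_add_sq {a b : ℝ} (hb : b ≠ 0) : |a| < √(a ^ 2 + b ^ 2) := by
  rw [← sqrt_sq_eq_abs]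
  exact sqrt_lt_sqrt (sq_nonneg a) (by simpa using pow_pos (abs_pos.mpr hb) 2)

lemma two_mul_abs_le_rodDistSum (M x ρ : ℝ) : 2 * |x| ≤ rodDistSum M x ρ := by
  unfold rodDistSum
  have h := abs_add_le (x - M) (x + M)
  rw [show x - M + (x + M) = 2 * x by ring, abs_mul, abs_two] at h
  linarith [abs_le_sqrt_sq_add_sq (x - M) ρ, abs_le_sqrt_sq_add_sq (x + M) ρ]

lemma two_mul_lt_rodDistSum {M x ρ : ℝ} (hM : 0 ≤ M) (h : ¬(ρ = 0 ∧ |x| ≤ M)) :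
    2 * M < rodDistSum M x ρ := by
  rcases not_and_or.mp h with hρ | hx
  · unfold rodDistSum
    have h := abs_sub (x + M) (x - M)
    rw [show x + M - (x - M) = 2 * M by ring, abs_of_nonneg (by linarith)] at h
    linarith [abs_lt_sqrt_sq_add_sq (a := x - M) hρ, abs_lt_sqrt_sq_add_sq (a := x + M) hρ]
  · linarith [two_mul_abs_le_rodDistSum M x ρ, not_le.mp hx]

lemma rodDistSum_eq_of_abs_le {M x : ℝ} (hx : |x| ≤ M) : rodDistSum M x 0 = 2 * M := by
  obtain ⟨hx₁, hx₂⟩ := abs_le.mp hx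
  simp only [rodDistSum, ne_eq, OfNat.ofNat_ne_zero, not_false_eq_true, zero_pow, add_zero,
    sqrt_sq_eq_abs, abs_of_nonpos (by linarith : x - M ≤ 0), abs_of_nonneg (by linarith : 0 ≤ x + M)]
  ring

lemma ernst0_pos {M x ρ : ℝ} (hM : 0 ≤ M) (h : ¬(ρ = 0 ∧ |x| ≤ M)) : 0 < ernst0 M x ρ := by
  have := two_mul_lt_rodDistSum hM h
  rw [ernst0_eq]
  exact div_pos (by linarith) (by linarith)

lemma ernst0_eq_zero_of_abs_le {M x : ℝ} (hx : |x| ≤ M) : ernst0 M x 0 = 0 := by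
  rw [ernst0_eq, rodDistSum_eq_of_abs_le hx, sub_self, zero_div]

lemma exp_neg_le_ernst0 {M d y : ℝ} (ρ : ℝ) (hM : 0 ≤ M) (hd : M < d) (hy : d ≤ |y|) :
    exp (-(2 * M / (d - M))) ≤ ernst0 M y ρ := by
  have hu := two_mul_abs_le_rodDistSum M y ρ
  have ht : 0 < rodDistSum M y ρ - 2 * M := by linarith
  calc exp (-(2 * M / (d - M))) = exp (-(4 * M / (2 * d - 2 * M))) := by
        have : d - M ≠ 0 := by linarith
        congr 2
        rw [show 2 * d - 2 * M = 2 * (d - M) by ring]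
        field_simp
        ring
    _ ≤ exp (-(4 * M / (rodDistSum M y ρ - 2 * M))) := by
        gcongr <;> linarith
    _ ≤ ernst0 M y ρ := by
        rw [ernst0_eq, show rodDistSum M y ρ + 2 * M = rodDistSum M y ρ - 2 * M + 4 * M by ring]
        exact exp_neg_div_le_div_add ht (by linarith)

/-- The left side bounds `-log` of the pair of images at `±mL` (via `exp_neg_le_ernst0` with
`d = mL - L/2`) minus the regularising exponent `4M/(mL)`. -/
lemma div_sub_div_le_div_sq {M L m : ℝ} (hM : 0 < M) (hL : 2 * M < L) (hm : 1 ≤ m) :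
    4 * M / (m * L - (L / 2 + M)) - 4 * M / (m * L) ≤
      4 * M * (L / 2 + M) / (L * (L / 2 - M)) / m ^ 2 := by
  have hb : 0 < L / 2 - M := by linarith
  have hmb : m * (L / 2 - M) ≤ m * L - (L / 2 + M) := by nlinarith
  have hmL : 0 < m * L := by nlinarith
  rw [div_sub_div _ _ ((mul_pos (by linarith) hb).trans_le hmb).ne' hmL.ne', div_div,
    show 4 * M * (m * L) - (m * L - (L / 2 + M)) * (4 * M) = 4 * M * (L / 2 + M) by ring]
  refine div_le_div_of_nonneg_left (mul_pos (by linarith) (by linarith)).le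
    (mul_pos (mul_pos (by linarith) hb) (by positivity)) ?_
  calc L * (L / 2 - M) * m ^ 2 = m * (L / 2 - M) * (m * L) := by ring
    _ ≤ (m * L - (L / 2 + M)) * (m * L) := by gcongr

lemma exp_neg_div_sq_le_ernst0_mul_ernst0_mul_exp {M L x : ℝ} (ρ : ℝ) (hM : 0 < M)
    (hL : 2 * M < L) (hx : |x| ≤ L / 2) (n : ℕ) :
    exp (-(4 * M * (L / 2 + M) / (L * (L / 2 - M)) / ((n : ℝ) + 1) ^ 2)) ≤
      ernst0 M (x + (n + 1) * L) ρ * ernst0 M (x - (n + 1) * L) ρ *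
        exp (4 * M / ((n + 1) * L)) := by
  set m : ℝ := n + 1
  have hm : 1 ≤ m := by simp [m]
  have hd : M < m * L - L / 2 := by nlinarith
  obtain ⟨hx₁, hx₂⟩ := abs_le.mp hx
  have hplus := exp_neg_le_ernst0 ρ hM.le hd
    ((show m * L - L / 2 ≤ x + m * L by linarith).trans (le_abs_self _))
  have hminus := exp_neg_le_ernst0 ρ hM.le hd
    ((show m * L - L / 2 ≤ -(x - m * L) by linarith).trans (neg_le_abs _))
  calc exp (-(4 * M * (L / 2 + M) / (L * (L / 2 - M)) / m ^ 2))
      ≤ exp (-(2 * M / (m * L - L / 2 - M))) * exp (-(2 * M / (m * L - L / 2 - M))) *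
          exp (4 * M / (m * L)) := by
        rw [← exp_add, ← exp_add, exp_le_exp]
        have := div_sub_div_le_div_sq hM hL hm
        rw [show m * L - (L / 2 + M) = m * L - L / 2 - M by ring] at this
        linarith [show 4 * M / (m * L - L / 2 - M) = 2 * (2 * M / (m * L - L / 2 - M)) by ring]
    _ ≤ ernst0 M (x + m * L) ρ * ernst0 M (x - m * L) ρ * exp (4 * M / (m * L)) := by
        gcongr
        exact (exp_pos _).le.trans hplus

lemma summable_div_nat_add_one_sq (C : ℝ) : Summable fun n : ℕ ↦ C / ((n : ℝ) + 1) ^ 2 := by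
  have h := (summable_nat_add_iff 1).mpr (Real.summable_one_div_nat_pow.mpr one_lt_two)
  simpa [div_eq_mul_one_div C] using h.mul_left C

theorem ernstPeriodic_positivity_general (M L : ℝ) (hM : 0 < M) (hL : 2 * M < L)
    (x ρ : ℝ) (hx : |x| ≤ L / 2) :
    (¬ (ρ = 0 ∧ |x| ≤ M) → 0 < ernstPeriodic M L x ρ) ∧
    ((ρ = 0 ∧ |x| ≤ M) → ernstPeriodic M L x ρ = 0) := by
  refine ⟨fun h ↦ mul_pos (ernst0_pos hM.le h) ?_, fun ⟨hρ, hxM⟩ ↦ ?_⟩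
  · have hC : 0 ≤ 4 * M * (L / 2 + M) / (L * (L / 2 - M)) := by
      have : 0 < L / 2 - M := by linarith
      have : 0 < L := by linarith
      positivity
    exact tprod_pos_of_exp_neg_le (summable_div_nat_add_one_sq _) (fun n ↦ div_nonneg hC (sq_nonneg _))
      (exp_neg_div_sq_le_ernst0_mul_ernst0_mul_exp ρ hM hL hx)
  · rw [ernstPeriodic, hρ, ernst0_eq_zero_of_abs_le hxM, zero_mul]

/-- Theorem 2 of the paper: on the fundamental region `{|x| ≤ L/2, ρ ≥ 0}`, the
periodic Ernst potential is strictly positive away from the horizon segment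
`{ρ = 0, |x| ≤ M}`, and vanishes on the horizon. -/
theorem ernstPeriodic_positivity (M L : ℝ) (hM : 0 < M) (hL : 2 * M < L)
    (x ρ : ℝ) (hx : |x| ≤ L / 2) (hρ : 0 ≤ ρ) :
    (¬ (ρ = 0 ∧ |x| ≤ M) → 0 < ernstPeriodic M L x ρ) ∧
    ((ρ = 0 ∧ |x| ≤ M) → ernstPeriodic M L x ρ = 0) :=
  ernstPeriodic_positivity_general M L hM hL x ρ hx
end

section
/- Let \(M>0\), \(L>2M\), and let \({\cal E}(x,0)\) denote the boundary value on the axis, for \(M\le |x|\le L/2\), of the periodic Ernst potential \({\cal E}(x,\rho)={\cal E}_0(x,\rho)\prod_{n\ge1}{\cal E}_0(x+nL,\rho){\cal E}_0(x-nL,\rho)e^{4M/(nL)}\). Then \({\cal E}(x,0)=e^{4\gamma M/L}\,\frac{\Gamma\left(\frac{|x|+M}{L}\right)\Gamma\left(1-\frac{|x|-M}{L}\right)}{\Gamma\left(\frac{|x|-M}{L}\right)\Gamma\left(1-\frac{|x|+M}{L}\right)}\), where \(\gamma\) is the Euler-Mascheroni constant. -/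
/-!
On the axis, `ernst0 M y 0 = (|y| - M) / (|y| + M)`. Writing `u = (|x| + M) / L` and
`v = (|x| - M) / L`, the `n`-th factor of the periodic product becomes
`(n + v) (n - u) / ((n + u) (n - v)) · e^{2 (u - v) / n}`, a quotient of the Weierstrass factors
`(1 + z / n) e^{-z / n}` at `z = v, -u` and `z = u, -v`. The Weierstrass product
`∏ (1 + z / n) e^{-z / n} = e^{-γ z} / Γ(z + 1)` follows from Euler's limit `GammaSeq`; for `z > -1`
the factors lie in `(0, 1]`, so the product converges unconditionally. Finally `Γ(u + 1) = u Γ(u)`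
and `v / Γ(v + 1) = 1 / Γ(v)` absorb the prefactor `ernst0 M x 0 = v / u`.
-/

open Real Filter Finset Topology
open scoped Nat

theorem Real.multipliable_of_nonneg_of_le_one {ι : Type*} {f : ι → ℝ} (h₀ : ∀ i, 0 ≤ f i)
    (h₁ : ∀ i, f i ≤ 1) : Multipliable f :=
  ⟨_, tendsto_atTop_ciInf (Finset.prod_anti_set_of_le_one h₀ h₁)
    ⟨0, Set.forall_mem_range.2 fun _ ↦ Finset.prod_nonneg fun i _ ↦ h₀ i⟩⟩

/-- The factor of index `n + 1` in `∏_{n ≥ 1} (1 + z / n) e^{-z / n}`. -/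
noncomputable def weierstrassFactor (z : ℝ) (n : ℕ) : ℝ :=
  (1 + z / (n + 1)) * exp (-(z / (n + 1)))

theorem weierstrassFactor_pos {z : ℝ} (hz : -1 < z) (n : ℕ) : 0 < weierstrassFactor z n := by
  have : -1 < z / (n + 1) := by
    rw [lt_div_iff₀ (by positivity)]; nlinarith [(n.cast_nonneg : (0:ℝ) ≤ n)]
  exact mul_pos (by linarith) (exp_pos _)

theorem weierstrassFactor_le_one (z : ℝ) (n : ℕ) : weierstrassFactor z n ≤ 1 := by
  have := add_one_le_exp (z / (n + 1))
  calc weierstrassFactor z n ≤ exp (z / (n + 1)) * exp (-(z / (n + 1))) :=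
        mul_le_mul_of_nonneg_right (by linarith) (exp_pos _).le
    _ = 1 := by rw [← exp_add, add_neg_cancel, exp_zero]

theorem GammaSeq_add_one_mul_prod_weierstrassFactor {z : ℝ} (hz : -1 < z) {N : ℕ} (hN : N ≠ 0) :
    GammaSeq (z + 1) N * ∏ k ∈ range N, weierstrassFactor z k =
      N / (N + z + 1) * exp (-(z * (harmonic N - log N))) := by
  have hN₀ : (0 : ℝ) < N := by positivity
  have hpoly : ∏ k ∈ range N, (1 + z / (k + 1)) = (∏ k ∈ range N, (z + 1 + k)) / N ! := by
    rw [← prod_range_add_one_eq_factorial, Nat.cast_prod, ← prod_div_distrib]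
    refine prod_congr rfl fun k _ ↦ ?_
    push_cast
    field_simp
    ring
  have hexp : ∏ k ∈ range N, exp (-(z / (k + 1))) = exp (-(z * harmonic N)) := by
    rw [← exp_sum, harmonic]
    push_cast
    rw [mul_sum, ← sum_neg_distrib]
    simp only [div_eq_mul_inv]
  have hpos : 0 < ∏ k ∈ range N, (z + 1 + k) :=
    prod_pos fun k _ ↦ by linarith [(k.cast_nonneg : (0:ℝ) ≤ k)]
  have hrpow : (N : ℝ) ^ (z + 1) = N * exp (z * log N) := by
    rw [rpow_add hN₀, rpow_one, rpow_def_of_pos hN₀, mul_comm, mul_comm (log _)]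
  simp only [weierstrassFactor, prod_mul_distrib, hpoly, hexp, GammaSeq, prod_range_succ, hrpow]
  rw [mul_sub, neg_sub, sub_eq_add_neg, exp_add]
  field_simp
  ring

theorem hasProd_weierstrassFactor {z : ℝ} (hz : -1 < z) :
    HasProd (weierstrassFactor z) (exp (-(eulerMascheroniConstant * z)) / Gamma (z + 1)) := by
  obtain ⟨P, hP⟩ := multipliable_of_nonneg_of_le_one (fun n ↦ (weierstrassFactor_pos hz n).le)
    (weierstrassFactor_le_one z)
  have hpartial : Tendsto (fun N : ℕ ↦ GammaSeq (z + 1) N * ∏ k ∈ range N, weierstrassFactor z k)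
      atTop (𝓝 (exp (-(eulerMascheroniConstant * z)))) := by
    have hlim := (tendsto_natCast_div_add_atTop (z + 1)).mul
      ((tendsto_harmonic_sub_log.const_mul z).neg.rexp)
    rw [one_mul, mul_comm z] at hlim
    refine hlim.congr' ?_
    filter_upwards [eventually_ne_atTop 0] with N hN
    rw [GammaSeq_add_one_mul_prod_weierstrassFactor hz hN, add_assoc]
  have hΓ : Gamma (z + 1) ≠ 0 := (Gamma_pos_of_pos (by linarith)).ne'
  have hP' := tendsto_nhds_unique ((GammaSeq_tendsto_Gamma _).mul hP.tendsto_prod_nat) hpartial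
  rwa [← hP', mul_div_cancel_left₀ _ hΓ]

theorem weierstrassFactor_quotient (u v : ℝ) (n : ℕ) :
    weierstrassFactor v n * weierstrassFactor (-u) n /
        (weierstrassFactor u n * weierstrassFactor (-v) n) =
      (n + 1 + v) / (n + 1 + u) * ((n + 1 - u) / (n + 1 - v)) * exp (2 * (u - v) / (n + 1)) := by
  have hc : (n : ℝ) + 1 ≠ 0 := n.cast_add_one_ne_zero
  have hexp : exp (2 * (u - v) / (n + 1)) =
      exp (-(v / (n + 1))) * exp (-(-u / (n + 1))) /
        (exp (-(u / (n + 1))) * exp (-(-v / (n + 1)))) := by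
    rw [← exp_add, ← exp_add, ← exp_sub]
    congr 1
    field_simp
    ring
  simp only [weierstrassFactor, hexp, one_add_div hc, neg_div, ← sub_eq_add_neg, one_sub_div hc]
  field_simp

theorem hasProd_weierstrassFactor_quotient {u v : ℝ} (hu₀ : -1 < u) (hu₁ : u < 1) (hv₀ : -1 < v)
    (hv₁ : v < 1) :
    HasProd (fun n ↦ weierstrassFactor v n * weierstrassFactor (-u) n /
        (weierstrassFactor u n * weierstrassFactor (-v) n))
      (exp (2 * eulerMascheroniConstant * (u - v)) *
        (Gamma (u + 1) * Gamma (1 - v)) / (Gamma (v + 1) * Gamma (1 - u))) := by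
  have hΓ {z : ℝ} (hz : -1 < z) : 0 < Gamma (z + 1) := Gamma_pos_of_pos (by linarith)
  have hden : exp (-(eulerMascheroniConstant * u)) / Gamma (u + 1) *
      (exp (-(eulerMascheroniConstant * -v)) / Gamma (-v + 1)) ≠ 0 :=
    (mul_pos (div_pos (exp_pos _) (hΓ hu₀)) (div_pos (exp_pos _) (hΓ (by linarith)))).ne'
  refine (congrArg (HasProd _) ?_).mpr <|
    ((hasProd_weierstrassFactor hv₀).mul (hasProd_weierstrassFactor (z := -u) (by linarith))).div₀
      ((hasProd_weierstrassFactor hu₀).mul (hasProd_weierstrassFactor (z := -v) (by linarith))) hden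
  have hexp : exp (2 * eulerMascheroniConstant * (u - v)) =
      exp (-(eulerMascheroniConstant * v)) * exp (-(eulerMascheroniConstant * -u)) /
        (exp (-(eulerMascheroniConstant * u)) * exp (-(eulerMascheroniConstant * -v))) := by
    rw [← exp_add, ← exp_add, ← exp_sub]
    ring_nf
  rw [hexp, neg_add_eq_sub, neg_add_eq_sub]
  field_simp

theorem Real.div_Gamma_add_one (s : ℝ) : s / Gamma (s + 1) = (Gamma s)⁻¹ := by
  rcases eq_or_ne s 0 with rfl | hs
  · simp
  · rw [Gamma_add_one hs, div_mul_cancel_left₀ hs]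

theorem ernst0_axis {M y : ℝ} (hM : 0 ≤ M) (hy : M ≤ |y|) :
    ernst0 M y 0 = (|y| - M) / (|y| + M) := by
  have hsum : |y - M| + |y + M| = 2 * |y| := by
    rcases le_total 0 y with h | h <;>
      [rw [abs_of_nonneg h] at hy ⊢; rw [abs_of_nonpos h] at hy ⊢] <;>
      [rw [abs_of_nonneg (by linarith), abs_of_nonneg (by linarith)];
        rw [abs_of_nonpos (by linarith), abs_of_nonpos (by linarith)]] <;>
      ring
  rw [ernst0, zero_pow two_ne_zero, add_zero, add_zero, sqrt_sq_eq_abs, sqrt_sq_eq_abs, hsum,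
    ← mul_sub, ← mul_add, mul_div_mul_left _ _ two_ne_zero]

theorem ernst0_axis_add_mul_ernst0_axis_sub {M x t : ℝ} (hM : 0 ≤ M) (ht : |x| + M ≤ t) :
    ernst0 M (x + t) 0 * ernst0 M (x - t) 0 =
      (t + |x| - M) / (t + |x| + M) * ((t - |x| - M) / (t - |x| + M)) := by
  rcases le_total 0 x with hx | hx <;>
    [rw [abs_of_nonneg hx] at ht ⊢; rw [abs_of_nonpos hx] at ht ⊢] <;>
    rw [ernst0_axis hM (by rw [abs_of_nonneg (by linarith)]; linarith),
      ernst0_axis hM (by rw [abs_of_nonpos (by linarith)]; linarith),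
      abs_of_nonneg (by linarith), abs_of_nonpos (by linarith)] <;>
    ring

theorem ernst0_axis_translates_eq_weierstrassFactor_quotient {M L x : ℝ} (hM : 0 < M)
    (hx : |x| + M ≤ L) (n : ℕ) :
    ernst0 M (x + (n + 1) * L) 0 * ernst0 M (x - (n + 1) * L) 0 * exp (4 * M / ((n + 1) * L)) =
      weierstrassFactor ((|x| - M) / L) n * weierstrassFactor (-((|x| + M) / L)) n /
        (weierstrassFactor ((|x| + M) / L) n * weierstrassFactor (-((|x| - M) / L)) n) := by
  have hL : 0 < L := by linarith [abs_nonneg x]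
  have hc : (1 : ℝ) ≤ n + 1 := by linarith [(n.cast_nonneg : (0:ℝ) ≤ n)]
  have ht : |x| + M ≤ (n + 1) * L := hx.trans (le_mul_of_one_le_left hL.le hc)
  rw [ernst0_axis_add_mul_ernst0_axis_sub hM.le ht, weierstrassFactor_quotient]
  congr 2 <;> field_simp <;> ring

/-- The value of the periodic Ernst potential on the axis `ρ = 0`, for
`M ≤ |x| ≤ L/2`, in terms of Gamma functions:
`ℰ(x,0) = e^{4γM/L} Γ((|x|+M)/L) Γ(1-(|x|-M)/L) / (Γ((|x|-M)/L) Γ(1-(|x|+M)/L))`. -/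
theorem ernstPeriodic_on_axis (M L : ℝ) (hM : 0 < M) (hL : 2 * M < L)
    (x : ℝ) (hx₁ : M ≤ |x|) (hx₂ : |x| ≤ L / 2) :
    ernstPeriodic M L x 0 =
      Real.exp (4 * Real.eulerMascheroniConstant * M / L) *
        (Real.Gamma ((|x| + M) / L) * Real.Gamma (1 - (|x| - M) / L)) /
        (Real.Gamma ((|x| - M) / L) * Real.Gamma (1 - (|x| + M) / L)) := by
  have hL₀ : 0 < L := by linarith
  set u := (|x| + M) / L with hu
  set v := (|x| - M) / L with hv
  have hu₀ : 0 < u := by positivity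
  have hu₁ : u < 1 := by rw [div_lt_one hL₀]; linarith
  have hv₀ : 0 ≤ v := div_nonneg (by linarith) hL₀.le
  have hv₁ : v < 1 := by rw [div_lt_one hL₀]; linarith
  have hprefactor : (|x| - M) / (|x| + M) = v / u := (div_div_div_cancel_right₀ hL₀.ne' _ _).symm
  have hexp : 2 * eulerMascheroniConstant * (u - v) = 4 * eulerMascheroniConstant * M / L := by
    rw [hu, hv]; field_simp; ring
  rw [ernstPeriodic,
    tprod_congr (ernst0_axis_translates_eq_weierstrassFactor_quotient hM (by linarith)),
    (hasProd_weierstrassFactor_quotient (by linarith) hu₁ (by linarith) hv₁).tprod_eq,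
    ernst0_axis hM.le hx₁, hprefactor, hexp, Gamma_add_one hu₀.ne']
  calc v / u * (exp (4 * eulerMascheroniConstant * M / L) * (u * Gamma u * Gamma (1 - v)) /
        (Gamma (v + 1) * Gamma (1 - u)))
      = exp (4 * eulerMascheroniConstant * M / L) * (v / Gamma (v + 1)) *
          (Gamma u * Gamma (1 - v)) / Gamma (1 - u) := by
        field_simp
    _ = _ := by rw [div_Gamma_add_one]; ring
end

section
/- Let \(\omega\) be a \(C^2\) solution of the Euler-Darboux equation on \(\mathbb{R}\times(0,\infty)\) that is \(L\)-periodic in \(x\) (\(\omega(x+L,\rho)=\omega(x,\rho)\)), even in \(x\) (\(\omega(-x,\rho)=\omega(x,\rho)\)), and smooth up to \(\rho=0\) on \(\{\rho=0, M<|x|\le L/2\}\) for some \(0<M<L/2\), with \(\omega_\rho(x,0)=0\) there. If \(k\) is any \(C^1\) function on \(\mathbb{R}\times(0,\infty)\) with \(k_\rho = \frac{\rho}{4}(\omega_\rho^2-\omega_x^2)\) and \(k_x=\frac{\rho}{2}\omega_x\omega_\rho\), then \(k(x+L,\rho)=k(x,\rho)\) for all \((x,\rho)\) (assuming the line integral of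 the 1-form along \(\rho=0\) between singular points receives canceling contributions by the even symmetry). -/
noncomputable def pdx (ω : ℝ → ℝ → ℝ) (x ρ : ℝ) : ℝ := deriv (fun x' => ω x' ρ) x

noncomputable def pdρ (ω : ℝ → ℝ → ℝ) (x ρ : ℝ) : ℝ := deriv (fun ρ' => ω x ρ') ρ

def IsEulerDarboux (ω : ℝ → ℝ → ℝ) (U : Set (ℝ × ℝ)) : Prop :=
  ∀ p ∈ U, pdx (pdx ω) p.1 p.2 + (pdρ ω p.1 p.2) / p.2 + pdρ (pdρ ω) p.1 p.2 = 0

/-!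
On every line `ρ = const` the slope `k_x = (ρ/2) ω_x ω_ρ` is `L`-periodic and odd in `x`, since
`ω_x` is periodic and odd and `ω_ρ` is periodic and even. An odd derivative makes `k(·, ρ)` even,
and a periodic derivative makes `k(x + L, ρ) - k(x, ρ)` independent of `x`; at `x = -L/2` that
difference is `k(L/2, ρ) - k(-L/2, ρ) = 0`.
-/

open Function

section Slices

variable {𝕜 : Type*} [NontriviallyNormedField 𝕜]
  {E : Type*} [NormedAddCommGroup E] [NormedSpace 𝕜 E]
  {F : Type*} [NormedAddCommGroup F] [NormedSpace 𝕜 F]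
  {G : Type*} [NormedAddCommGroup G] [NormedSpace 𝕜 G]

theorem DifferentiableOn.differentiable_comp_prodMk_const {f : E × F → G} {s : Set (E × F)}
    (hf : DifferentiableOn 𝕜 f s) (hs : IsOpen s) {y : F} (hy : ∀ x, (x, y) ∈ s) :
    Differentiable 𝕜 fun x => f (x, y) := fun x =>
  (hf.differentiableAt (hs.mem_nhds (hy x))).comp x
    (differentiableAt_id.prodMk (differentiableAt_const y))

end Slices

namespace Function

variable {𝕜 : Type*} [NontriviallyNormedField 𝕜]
  {F : Type*} [NormedAddCommGroup F] [NormedSpace 𝕜 F] {f : 𝕜 → F}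

theorem Periodic.deriv {c : 𝕜} (h : Periodic f c) : Periodic (deriv f) c := fun x => by
  rw [← deriv_comp_add_const, h.funext]

theorem Even.deriv (h : f.Even) : (deriv f).Odd := fun x => by
  have hflip : (fun x => f (-x)) = f := funext h
  simpa only [hflip, neg_neg] using deriv_comp_neg f (-x)

end Function

namespace Function

variable {𝕜 : Type*} [RCLike 𝕜]
  {F : Type*} [NormedAddCommGroup F] [NormedSpace 𝕜 F] {f : 𝕜 → F}

theorem even_of_deriv_odd (hf : Differentiable 𝕜 f) (h : (deriv f).Odd) : f.Even := by
  have hflip : Differentiable 𝕜 fun x => f (-x) := hf.comp differentiable_neg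
  have hconst : ∀ x, deriv (fun x => f x - f (-x)) x = 0 := fun x => by
    rw [deriv_fun_sub (hf x) (hflip x), deriv_comp_neg, h.eq, sub_neg_eq_add, add_neg_cancel]
  intro x
  have := is_const_of_deriv_eq_zero (hf.fun_sub hflip) hconst x 0
  rwa [neg_zero, sub_self, sub_eq_zero, eq_comm] at this

theorem periodic_of_deriv_periodic_of_eq {c : 𝕜} (hf : Differentiable 𝕜 f)
    (h : (deriv f).Periodic c) {x₀ : 𝕜} (hx₀ : f (x₀ + c) = f x₀) : f.Periodic c := by
  have hshift : Differentiable 𝕜 fun x => f (x + c) := hf.comp (differentiable_id.add_const c)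
  have hconst : ∀ x, deriv (fun x => f (x + c) - f x) x = 0 := fun x => by
    rw [deriv_fun_sub (hshift x) (hf x), deriv_comp_add_const, h x, sub_self]
  intro x
  have := is_const_of_deriv_eq_zero (hshift.fun_sub hf) hconst x x₀
  rwa [hx₀, sub_self, sub_eq_zero] at this

theorem periodic_of_deriv_odd_of_periodic {c : 𝕜} (hf : Differentiable 𝕜 f)
    (hodd : (deriv f).Odd) (hper : (deriv f).Periodic c) : f.Periodic c := by
  refine periodic_of_deriv_periodic_of_eq hf hper (x₀ := -(c / 2)) ?_
  rw [show -(c / 2) + c = c / 2 by ring]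
  exact (even_of_deriv_odd hf hodd (c / 2)).symm

end Function

theorem conformal_factor_periodic_general (L : ℝ)
    (ω : ℝ → ℝ → ℝ)
    (hper : ∀ x ρ : ℝ, ω (x + L) ρ = ω x ρ)
    (heven : ∀ x ρ : ℝ, ω (-x) ρ = ω x ρ)
    (k : ℝ → ℝ → ℝ)
    (hkC1 : ContDiffOn ℝ 1 (fun p : ℝ × ℝ => k p.1 p.2) {p : ℝ × ℝ | 0 < p.2})
    (hkx : ∀ x ρ : ℝ, 0 < ρ → pdx k x ρ = ρ / 2 * (pdx ω x ρ) * (pdρ ω x ρ)) :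
    ∀ x ρ : ℝ, 0 < ρ → k (x + L) ρ = k x ρ := by
  intro x ρ hρ
  have hk : Differentiable ℝ fun x => k x ρ :=
    (hkC1.differentiableOn one_ne_zero).differentiable_comp_prodMk_const
      (isOpen_lt continuous_const continuous_snd) fun _ => hρ
  have hωx_per : ∀ y, pdx ω (y + L) ρ = pdx ω y ρ := Periodic.deriv fun x => hper x ρ
  have hωx_odd : ∀ y, pdx ω (-y) ρ = -pdx ω y ρ := Even.deriv fun x => heven x ρ
  have hωρ_per : ∀ y, pdρ ω (y + L) ρ = pdρ ω y ρ := fun y => by simp only [pdρ, hper]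
  have hωρ_even : ∀ y, pdρ ω (-y) ρ = pdρ ω y ρ := fun y => by simp only [pdρ, heven]
  have hk_deriv : deriv (fun x => k x ρ) = fun x => ρ / 2 * pdx ω x ρ * pdρ ω x ρ :=
    funext fun x => hkx x ρ hρ
  refine periodic_of_deriv_odd_of_periodic hk (fun y => ?_) (fun y => ?_) x
  · simp only [hk_deriv, hωx_odd, hωρ_even]
    ring
  · simp only [hk_deriv, hωx_per, hωρ_per]

/-- Theorem 3 of the paper: if `ω` is a C² solution of the Euler-Darboux equation on
`ℝ × (0,∞)`, `L`-periodic and even in `x`, smooth up to the axis on the segment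
`{ρ = 0, M < |x| ≤ L/2}` with `ω_ρ(x,0) = 0` there, then any C¹ function `k` with
`k_ρ = (ρ/4)(ω_ρ² - ω_x²)` and `k_x = (ρ/2) ω_x ω_ρ` is itself `L`-periodic in `x`. -/
theorem conformal_factor_periodic (M L : ℝ) (hM : 0 < M) (hL : 2 * M < L)
    (ω : ℝ → ℝ → ℝ)
    (hC2 : ContDiffOn ℝ 2 (fun p : ℝ × ℝ => ω p.1 p.2)
      ({p : ℝ × ℝ | 0 < p.2} ∪ {p : ℝ × ℝ | p.2 = 0 ∧ M < |p.1| ∧ |p.1| ≤ L / 2}))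
    (hsol : IsEulerDarboux ω {p : ℝ × ℝ | 0 < p.2})
    (hper : ∀ x ρ : ℝ, ω (x + L) ρ = ω x ρ)
    (heven : ∀ x ρ : ℝ, ω (-x) ρ = ω x ρ)
    (haxis : ∀ x : ℝ, M < |x| → |x| ≤ L / 2 → pdρ ω x 0 = 0)
    (k : ℝ → ℝ → ℝ)
    (hkC1 : ContDiffOn ℝ 1 (fun p : ℝ × ℝ => k p.1 p.2) {p : ℝ × ℝ | 0 < p.2})
    (hkρ : ∀ x ρ : ℝ, 0 < ρ →
      pdρ k x ρ = ρ / 4 * ((pdρ ω x ρ) ^ 2 - (pdx ω x ρ) ^ 2))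
    (hkx : ∀ x ρ : ℝ, 0 < ρ → pdx k x ρ = ρ / 2 * (pdx ω x ρ) * (pdρ ω x ρ)) :
    ∀ x ρ : ℝ, 0 < ρ → k (x + L) ρ = k x ρ :=
  conformal_factor_periodic_general L ω hper heven k hkC1 hkx
end
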